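/- Let $n \ge 2$, $K \ge 1$, $y \in \mathbb{R}^n$, $r > 0$, and $\Phi(x) = y + (x-y)(r/|x-y|)^{1+1/K}$ for $x \ne y$. Then for every $x \ne y$, the derivative $D\Phi(x)$ satisfies the distortion inequality $\max_{\xi \in \mathbb{S}^{n-1}} |D\Phi(x)\xi| \le K \min_{\xi \in \mathbb{S}^{n-1}} |D\Phi(x)\xi|$, and $\det D\Phi(x) = -\frac{1}{K}\left(\frac{r}{|x-y|}\right)^{n(1+1/K)} < 0$. -/

import Mathlib

/-!
At `x ≠ y` write `ρ = |x - y|`, `e = (x - y)/ρ` and `s = (r/ρ)^(1+1/K)`. Differentiating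
`Φ(z) = y + r^a |z - y|^(-a) (z - y)` with `a = 1 + 1/K` gives `DΦ(x) = s (I - a e eᵀ)`:
the identity on `e^⊥` and multiplication by `1 - a = -1/K` along `e`, all scaled by `s`.
Hence `|DΦ(x)ξ|² = s² (|ξ|² - (1 - K⁻²)⟨e, ξ⟩²)` lies between `(s/K)²` and `s²` on unit
vectors, and by the matrix determinant lemma `det DΦ(x) = sⁿ · (-1/K)`.
-/

open Real NormedSpace

theorem LinearMap.det_id_add_smulRight {R M : Type*} [CommRing R] [AddCommGroup M] [Module R M]
    [Module.Free R M] [Module.Finite R M] (f : M →ₗ[R] R) (x : M) :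
    LinearMap.det (LinearMap.id + f.smulRight x) = 1 + f x := by
  let b := Module.Free.chooseBasis R M
  rw [← det_toMatrix b, map_add, toMatrix_id, toMatrix_smulRight, Matrix.vecMulVec_eq Unit,
    Matrix.det_one_add_replicateCol_mul_replicateRow]
  conv_rhs => rw [← b.sum_repr x, map_sum]
  simp only [dotProduct, Function.comp_apply, map_smul, smul_eq_mul, mul_comm]

section AxialScaling

variable {E : Type*} [NormedAddCommGroup E] [InnerProductSpace ℝ E]

/-- For a unit vector `e`, the map fixing `e^⊥` pointwise and sending `e` to `μ • e`. -/
noncomputable def axialScaling (e : E) (μ : ℝ) : E →L[ℝ] E :=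
  ContinuousLinearMap.id ℝ E + (μ - 1) • (innerSL ℝ e).smulRight e

variable {e : E} {μ : ℝ}

theorem axialScaling_apply (ξ : E) :
    axialScaling e μ ξ = ξ + ((μ - 1) * inner ℝ e ξ) • e := by
  simp [axialScaling, smul_smul]

theorem norm_axialScaling_apply_sq (he : ‖e‖ = 1) (ξ : E) :
    ‖axialScaling e μ ξ‖ ^ 2 = ‖ξ‖ ^ 2 - (1 - μ ^ 2) * inner ℝ e ξ ^ 2 := by
  rw [axialScaling_apply, norm_add_sq_real, inner_smul_right, real_inner_comm, norm_smul, he,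
    Real.norm_eq_abs, mul_one, sq_abs]
  ring

theorem abs_mul_norm_le_norm_axialScaling_apply (he : ‖e‖ = 1) (hμ : |μ| ≤ 1) (ξ : E) :
    |μ| * ‖ξ‖ ≤ ‖axialScaling e μ ξ‖ := by
  have hinner : inner ℝ e ξ ^ 2 ≤ ‖ξ‖ ^ 2 := by
    simpa [he, sq_abs] using pow_le_pow_left₀ (abs_nonneg _) (abs_real_inner_le_norm e ξ) 2
  have hμ2 : μ ^ 2 ≤ 1 := by nlinarith [abs_nonneg μ, sq_abs μ]
  rw [← pow_le_pow_iff_left₀ (by positivity) (norm_nonneg _) two_ne_zero, mul_pow, sq_abs,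
    norm_axialScaling_apply_sq he]
  nlinarith

theorem norm_axialScaling_apply_le (he : ‖e‖ = 1) (hμ : |μ| ≤ 1) (ξ : E) :
    ‖axialScaling e μ ξ‖ ≤ ‖ξ‖ := by
  have hμ2 : μ ^ 2 ≤ 1 := by nlinarith [abs_nonneg μ, sq_abs μ]
  rw [← pow_le_pow_iff_left₀ (norm_nonneg _) (norm_nonneg _) two_ne_zero,
    norm_axialScaling_apply_sq he]
  nlinarith [sq_nonneg (inner ℝ e ξ)]

theorem norm_axialScaling_apply_le_inv_abs_mul (he : ‖e‖ = 1) (hμ0 : μ ≠ 0)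
    (hμ : |μ| ≤ 1) {ξ η : E} (hξ : ‖ξ‖ = 1) (hη : ‖η‖ = 1) :
    ‖axialScaling e μ ξ‖ ≤ |μ|⁻¹ * ‖axialScaling e μ η‖ := by
  calc ‖axialScaling e μ ξ‖ ≤ 1 := hξ ▸ norm_axialScaling_apply_le he hμ ξ
    _ = |μ|⁻¹ * (|μ| * ‖η‖) := by
      rw [hη, mul_one, inv_mul_cancel₀ (abs_ne_zero.mpr hμ0)]
    _ ≤ |μ|⁻¹ * ‖axialScaling e μ η‖ := by
      gcongr
      exact abs_mul_norm_le_norm_axialScaling_apply he hμ η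

theorem det_axialScaling [FiniteDimensional ℝ E] (he : ‖e‖ = 1) :
    LinearMap.det (axialScaling e μ : E →ₗ[ℝ] E) = μ := by
  have : (axialScaling e μ : E →ₗ[ℝ] E) =
      LinearMap.id + ((μ - 1) • innerₛₗ ℝ e).smulRight e := by
    ext ξ
    simp [axialScaling, smul_smul]
  rw [this, LinearMap.det_id_add_smulRight]
  simp [he]

end AxialScaling

section RadialStretch

variable {E : Type*} [NormedAddCommGroup E] [InnerProductSpace ℝ E]

theorem hasFDerivAt_norm_rpow_of_ne_zero {x : E} (hx : x ≠ 0) (p : ℝ) :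
    HasFDerivAt (fun z : E => ‖z‖ ^ p) ((p * ‖x‖ ^ (p - 2)) • innerSL ℝ x) x := by
  have h := (hasStrictFDerivAt_norm_sq x).hasFDerivAt.rpow_const (p := p / 2) (by simp [hx])
  convert h using 1
  · ext z
    rw [← rpow_natCast_mul (norm_nonneg z)]
    ring_nf
  · ext ξ
    simp only [smul_apply, innerSL_apply_apply, smul_eq_mul, nsmul_eq_mul]
    rw [← rpow_natCast_mul (norm_nonneg x)]
    ring_nf

theorem hasFDerivAt_norm_rpow_smul_self {x : E} (hx : x ≠ 0) (p : ℝ) :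
    HasFDerivAt (fun z : E => ‖z‖ ^ p • z)
      (‖x‖ ^ p • axialScaling (normalize x) (1 + p)) x := by
  refine ((hasFDerivAt_norm_rpow_of_ne_zero hx p).smul (hasFDerivAt_id x)).congr_fderiv ?_
  have hpow : ‖x‖ ^ (p - 2) = ‖x‖ ^ p / ‖x‖ ^ 2 := by
    rw [rpow_sub (norm_pos_iff.mpr hx), rpow_two]
  ext ξ
  simp only [add_apply, smul_apply, ContinuousLinearMap.smulRight_apply,
    ContinuousLinearMap.id_apply, id_eq, innerSL_apply_apply, axialScaling_apply,
    NormedSpace.normalize, real_inner_smul_left, smul_eq_mul, hpow]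
  match_scalars
  · ring
  · field_simp
    ring

noncomputable def radialStretch (y : E) (r a : ℝ) (z : E) : E :=
  y + (r / ‖z - y‖) ^ a • (z - y)

theorem radialStretch_eq {y : E} {r : ℝ} (hr : 0 ≤ r) (a : ℝ) :
    radialStretch y r a = fun z => y + r ^ a • (‖z - y‖ ^ (-a) • (z - y)) := by
  ext1 z
  rw [radialStretch, smul_smul, div_rpow hr (norm_nonneg _), rpow_neg (norm_nonneg _),
    div_eq_mul_inv]

theorem hasFDerivAt_radialStretch {y x : E} {r : ℝ} (hr : 0 ≤ r) (a : ℝ) (hx : x ≠ y) :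
    HasFDerivAt (radialStretch y r a)
      ((r / ‖x - y‖) ^ a • axialScaling (normalize (x - y)) (1 - a)) x := by
  have h := (((hasFDerivAt_norm_rpow_smul_self (sub_ne_zero.mpr hx) (-a)).comp x
    ((hasFDerivAt_id x).sub_const y)).const_smul (r ^ a)).const_add y
  rw [radialStretch_eq hr]
  refine h.congr_fderiv ?_
  rw [ContinuousLinearMap.comp_id, smul_smul, div_rpow hr (norm_nonneg _),
    rpow_neg (norm_nonneg _), div_eq_mul_inv, ← sub_eq_add_neg]

end RadialStretch

theorem radial_stretching_distortion_and_jacobian_general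
    (n : ℕ) (K : ℝ) (hK : 1 ≤ K)
    (y : EuclideanSpace ℝ (Fin n)) (r : ℝ) (hr : 0 < r)
    (Φ : EuclideanSpace ℝ (Fin n) → EuclideanSpace ℝ (Fin n))
    (hΦ : ∀ x, x ≠ y → Φ x = y + ((r / ‖x - y‖) ^ (1 + 1/K)) • (x - y)) :
    ∀ x, x ≠ y →
      (∀ ξ η : EuclideanSpace ℝ (Fin n), ‖ξ‖ = 1 → ‖η‖ = 1 →
        ‖fderiv ℝ Φ x ξ‖ ≤ K * ‖fderiv ℝ Φ x η‖) ∧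
      LinearMap.det (fderiv ℝ Φ x).toLinearMap
        = -(1 / K) * (r / ‖x - y‖) ^ ((n : ℝ) * (1 + 1/K)) ∧
      LinearMap.det (fderiv ℝ Φ x).toLinearMap < 0 := by
  intro x hx
  set s := (r / ‖x - y‖) ^ (1 + 1 / K)
  set A := axialScaling (normalize (x - y)) (-(1 / K))
  have hK0 : 0 < K := one_pos.trans_le hK
  have hρ : 0 < ‖x - y‖ := norm_pos_iff.mpr (sub_ne_zero.mpr hx)
  have he : ‖normalize (x - y)‖ = 1 := norm_normalize_eq_one_iff.mpr (sub_ne_zero.mpr hx)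
  have hμ : |-(1 / K)| = K⁻¹ := by rw [abs_neg, abs_of_pos (by positivity), one_div]
  have hDΦ : fderiv ℝ Φ x = s • A := by
    have h := hasFDerivAt_radialStretch hr.le (1 + 1 / K) hx
    rw [show 1 - (1 + 1 / K) = -(1 / K) by ring] at h
    exact (h.congr_of_eventuallyEq ((eventually_ne_nhds hx).mono hΦ)).fderiv
  have hdet : LinearMap.det (fderiv ℝ Φ x).toLinearMap
      = -(1 / K) * (r / ‖x - y‖) ^ ((n : ℝ) * (1 + 1/K)) := by
    rw [hDΦ, ContinuousLinearMap.toLinearMap_smul, LinearMap.det_smul, det_axialScaling he,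
      finrank_euclideanSpace_fin, mul_comm (n : ℝ), rpow_mul_natCast (by positivity), mul_comm]
  refine ⟨fun ξ η hξ hη => ?_, hdet, ?_⟩
  · have h := norm_axialScaling_apply_le_inv_abs_mul he (neg_ne_zero.mpr (by positivity))
      (hμ.trans_le (inv_le_one_of_one_le₀ hK)) hξ hη
    rw [hμ, inv_inv] at h
    rw [hDΦ, smul_apply, smul_apply, norm_smul, norm_smul, mul_left_comm]
    exact mul_le_mul_of_nonneg_left h (norm_nonneg s)
  · rw [hdet]
    exact mul_neg_of_neg_of_pos (neg_neg_of_pos (by positivity)) (by positivity)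

/-- The radial stretching map `Φ(x) = y + (x-y)(r/|x-y|)^{1+1/K}` is pointwise
`K`-quasiregular away from the center: its derivative satisfies the distortion
inequality `max_{|ξ|=1} |DΦ(x)ξ| ≤ K min_{|η|=1} |DΦ(x)η|`, and its Jacobian
determinant equals `-(1/K)(r/|x-y|)^{n(1+1/K)} < 0`. -/
theorem radial_stretching_distortion_and_jacobian
    (n : ℕ) (hn : 2 ≤ n) (K : ℝ) (hK : 1 ≤ K)
    (y : EuclideanSpace ℝ (Fin n)) (r : ℝ) (hr : 0 < r)
    (Φ : EuclideanSpace ℝ (Fin n) → EuclideanSpace ℝ (Fin n))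
    (hΦ : ∀ x, x ≠ y → Φ x = y + ((r / ‖x - y‖) ^ (1 + 1/K)) • (x - y)) :
    ∀ x, x ≠ y →
      (∀ ξ η : EuclideanSpace ℝ (Fin n), ‖ξ‖ = 1 → ‖η‖ = 1 →
        ‖fderiv ℝ Φ x ξ‖ ≤ K * ‖fderiv ℝ Φ x η‖) ∧
      LinearMap.det (fderiv ℝ Φ x).toLinearMap
        = -(1 / K) * (r / ‖x - y‖) ^ ((n : ℝ) * (1 + 1/K)) ∧
      LinearMap.det (fderiv ℝ Φ x).toLinearMap < 0 :=
  radial_stretching_distortion_and_jacobian_general n K hK y r hr Φ hΦ
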